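/- Let F = K((t)) or F = K{{t}} with the higher topology, let w: F → K be a continuous K-linear form, and set a_i = w(t^{-i}) for each i ∈ ℤ. Then the formal sum Σ_{i∈ℤ} a_i t^i defines an element of F; that is, if F = K((t)) then a_i = 0 for all sufficiently small i, and if F = K{{t}} then the values |a_i| are bounded and a_i → 0 as i → -∞. -/

import Mathlib

/-!
Common setting: `K` is a characteristic-zero local field (a finite extension of `ℚ_p`)
with ring of integers `𝒪 = {c : K | ‖c‖ ≤ 1}`, maximal ideal `𝔭 = {c : K | ‖c‖ < 1}`,
residue field of cardinality `q` and the absolute value normalised by `‖π‖ = q⁻¹`.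
We formalise the two-dimensional local fields `K((t))` (as `LaurentSeries K`) and
`K{{t}}` (as the submodule `mixedCarrier K` of `ℤ → K`), their higher topologies, and
the relevant functional-analytic notions (lattices, seminorms, boundedness,
c-compactness, compactoidness, completeness for nets, duality).
-/

open Filter Topology Set Pointwise
open scoped Classical

noncomputable section

namespace TwoDimLF

variable (K : Type) [NontriviallyNormedField K]

/-- `K` is a characteristic-zero nonarchimedean local field: the norm is nonarchimedean,
takes the values `q^ℤ` on `K˟` (with a uniformizer of norm `q⁻¹`), `K` is complete, locally
compact, of characteristic zero, and the residue field has exactly `q` elements. -/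
structure IsCharZeroLocalField (q : ℕ) : Prop where
  nonarch : ∀ x y : K, ‖x + y‖ ≤ max ‖x‖ ‖y‖
  one_lt_q : 1 < q
  norm_values : ∀ x : K, x ≠ 0 → ∃ n : ℤ, ‖x‖ = (q : ℝ) ^ (-n)
  exists_uniformizer : ∃ π : K, ‖π‖ = ((q : ℝ))⁻¹
  charZero : CharZero K
  locallyCompact : LocallyCompactSpace K
  complete : CompleteSpace K
  residue_card : ∃ s : Finset K, s.card = q ∧
    ∀ x : K, ‖x‖ ≤ 1 → ∃! y, y ∈ s ∧ ‖x - y‖ < 1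

/-- The fractional ideal `𝔭^n ⊆ K` for `n ∈ ℤ ∪ {-∞}`, with the convention `𝔭^(-∞) = K`. -/
def pB (q : ℕ) (n : WithBot ℤ) : Set K :=
  WithBot.recBotCoe Set.univ (fun m : ℤ => {x : K | ‖x‖ ≤ (q : ℝ) ^ (-m)}) n

/-- The fractional ideal `𝔭^n ⊆ K` for `n ∈ ℤ ∪ {∞}`, with the convention `𝔭^∞ = {0}`. -/
def pT (q : ℕ) (n : WithTop ℤ) : Set K :=
  WithTop.recTopCoe {0} (fun m : ℤ => {x : K | ‖x‖ ≤ (q : ℝ) ^ (-m)}) n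

/-- The fractional ideal `𝔭^n ⊆ K` for `n ∈ ℤ ∪ {±∞}`. -/
def pE (q : ℕ) (n : WithBot (WithTop ℤ)) : Set K :=
  WithBot.recBotCoe Set.univ (fun m : WithTop ℤ => pT K q m) n

/-- `q ^ n ∈ ℝ` for `n ∈ ℤ ∪ {-∞}`, with the convention `q^(-∞) = 0`. -/
def qpow (q : ℕ) (n : WithBot ℤ) : ℝ :=
  WithBot.recBotCoe 0 (fun m : ℤ => (q : ℝ) ^ m) n

/-- `1 - k` for `k ∈ ℤ ∪ {±∞}` (so `1 - (±∞) = ∓∞`). -/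
def oneSubE : WithBot (WithTop ℤ) → WithBot (WithTop ℤ) :=
  WithBot.recBotCoe ((⊤ : WithTop ℤ) : WithBot (WithTop ℤ))
    (WithTop.recTopCoe (⊥ : WithBot (WithTop ℤ))
      (fun z : ℤ => (((1 - z : ℤ) : WithTop ℤ) : WithBot (WithTop ℤ))))

section LCS

variable {V : Type} [AddCommGroup V] [Module K V]

/-- `S` is an `𝒪`-submodule of the `K`-vector space `V`, where `𝒪 = {c : K | ‖c‖ ≤ 1}`
is the ring of integers of `K`. -/
def IsOSubmodule (S : Set V) : Prop :=
  (0 : V) ∈ S ∧ (∀ x ∈ S, ∀ y ∈ S, x + y ∈ S) ∧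
    ∀ c : K, ‖c‖ ≤ 1 → ∀ x ∈ S, c • x ∈ S

/-- `S` is an `𝒪`-lattice in `V`: an `𝒪`-submodule such that every vector is carried
into `S` by some nonzero scalar. -/
def IsLatticeSet (S : Set V) : Prop :=
  IsOSubmodule K S ∧ ∀ v : V, ∃ a : K, a ≠ 0 ∧ a • v ∈ S

/-- A (nonarchimedean) seminorm on the `K`-vector space `V`. -/
def IsSeminorm (N : V → ℝ) : Prop :=
  (∀ (c : K) (v : V), N (c • v) = ‖c‖ * N v) ∧ ∀ v w : V, N (v + w) ≤ max (N v) (N w)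

/-- The gauge seminorm of a lattice `Λ ⊆ V`: `‖v‖_Λ = inf {‖a‖ : v ∈ aΛ}`. -/
def gaugeSeminorm (Λ : Set V) (v : V) : ℝ :=
  sInf {r : ℝ | ∃ a : K, v ∈ a • Λ ∧ r = ‖a‖}

/-- The group topology on `W` determined by a family `B` of neighbourhoods of zero:
neighbourhoods of `x` are generated by the translates `x + U`, `U ∈ B`. -/
def addTopologyOf {W : Type} [AddCommGroup W] (B : Set (Set W)) : TopologicalSpace W :=
  TopologicalSpace.mkOfNhds fun x => Filter.map (fun v => x + v) (⨅ U ∈ B, Filter.principal U)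

/-- `B` is (Von-Neumann) bounded for the locally convex topology `τ`: every open lattice
absorbs it. -/
def IsVNBounded (τ : TopologicalSpace V) (B : Set V) : Prop :=
  ∀ Λ : Set V, IsLatticeSet K Λ → IsOpen[τ] Λ → ∃ a : K, B ⊆ a • Λ

/-- The `𝒪`-submodule `A ⊆ V` is c-compact: for every decreasing filtered family of open
lattices `L i`, the canonical map `A → lim A/(L i ∩ A)` is surjective (phrased via
compatible families of representatives). -/
def IsCCompact (τ : TopologicalSpace V) (A : Set V) : Prop :=
  ∀ (ι : Type) (L : ι → Set V),
    (∀ i, IsLatticeSet K (L i) ∧ IsOpen[τ] (L i)) →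
    (∀ i j, ∃ k, L k ⊆ L i ∧ L k ⊆ L j) →
    ∀ x : ι → V, (∀ i, x i ∈ A) →
      (∀ i j, L j ⊆ L i → x j - x i ∈ L i) →
      ∃ a ∈ A, ∀ i, a - x i ∈ L i

/-- The `𝒪`-submodule `A ⊆ V` is compactoid: for every open lattice `Λ` there are finitely
many vectors `v₁, …, v_m ∈ V` with `A ⊆ Λ + 𝒪v₁ + ⋯ + 𝒪v_m`. -/
def IsCompactoid (τ : TopologicalSpace V) (A : Set V) : Prop :=
  ∀ Λ : Set V, IsLatticeSet K Λ → IsOpen[τ] Λ →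
    ∃ (m : ℕ) (v : Fin m → V),
      A ⊆ {u : V | ∃ l ∈ Λ, ∃ c : Fin m → K, (∀ j, ‖c j‖ ≤ 1) ∧ u = l + ∑ j, c j • v j}

/-- `A ⊆ V` is complete: every Cauchy net with values in `A` converges to a point of `A`
(for the topology `τ`). -/
def IsNetComplete (τ : TopologicalSpace V) (A : Set V) : Prop :=
  ∀ (ι : Type) [Preorder ι] [Nonempty ι],
    (∀ i j : ι, ∃ k, i ≤ k ∧ j ≤ k) →
    ∀ x : ι → V, (∀ i, x i ∈ A) →
      (∀ U ∈ @nhds V τ 0, ∃ i0, ∀ j ≥ i0, ∀ k ≥ i0, x j - x k ∈ U) →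
      ∃ a ∈ A, Filter.Tendsto x Filter.atTop (@nhds V τ a)

/-- `τ` makes `V` a locally convex topological `K`-vector space: it is a vector-space
topology whose filter of neighbourhoods of zero admits a basis of lattices. -/
def IsLCTVS (τ : TopologicalSpace V) : Prop :=
  @IsTopologicalAddGroup V τ _ ∧ @ContinuousSMul K V _ _ τ ∧
    ∀ S ∈ @nhds V τ 0, ∃ Λ : Set V, IsLatticeSet K Λ ∧ Λ ∈ @nhds V τ 0 ∧ Λ ⊆ S

/-- The topological dual of `(V, τ)`: continuous `K`-linear forms, as a set of functions. -/
def dualSet (τ : TopologicalSpace V) : Set (V → K) :=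
  {l | IsLinearMap K l ∧ @Continuous V K τ _ l}

/-- Basic neighbourhoods of zero for the `c`-topology on `V → K`: uniform convergence on
compactoid `𝒪`-submodules. -/
def cTopBasic (τ : TopologicalSpace V) : Set (Set (V → K)) :=
  {S | ∃ (B : Set V) (ε : ℝ), IsOSubmodule K B ∧ IsCompactoid K τ B ∧ 0 < ε ∧
    S = {l : V → K | ∀ x ∈ B, ‖l x‖ ≤ ε}}

/-- The `c`-topology (uniform convergence on compactoid `𝒪`-submodules) on `V → K`. -/
def cTop (τ : TopologicalSpace V) : TopologicalSpace (V → K) :=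
  addTopologyOf (cTopBasic K τ)

/-- The pseudo-polar `A^p = {l ∈ V' : |l(v)| < 1 for all v ∈ A}`. -/
def pseudoPolar (τ : TopologicalSpace V) (A : Set V) : Set (V → K) :=
  {l | l ∈ dualSet K τ ∧ ∀ v ∈ A, ‖l v‖ < 1}

/-- The pseudo-bipolar `A^{pp} = {v ∈ V : |l(v)| < 1 for all l ∈ A^p}`. -/
def pseudoBipolar (τ : TopologicalSpace V) (A : Set V) : Set V :=
  {v | ∀ l ∈ pseudoPolar K τ A, ‖l v‖ < 1}

end LCS

/-! ### The equal characteristic field `K((t))` -/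

/-- Basic neighbourhoods of zero for the higher topology on `K((t))`:
`Σ U_i t^i` where each `U_i` is an open neighbourhood of `0` in `K` and `U_i = K` for all
sufficiently large `i`. -/
def laurentBasic : Set (Set (LaurentSeries K)) :=
  {S | ∃ U : ℤ → Set K, (∀ i, IsOpen (U i) ∧ (0 : K) ∈ U i) ∧
    (∃ N : ℤ, ∀ i, N ≤ i → U i = Set.univ) ∧
    S = {f : LaurentSeries K | ∀ i, f.coeff i ∈ U i}}

/-- The higher topology on `K((t))`. -/
def laurentTop : TopologicalSpace (LaurentSeries K) := addTopologyOf (laurentBasic K)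

/-- `Λ = Σ_{i∈ℤ} 𝔭^{n_i} t^i ⊆ K((t))` for a sequence `(n_i) ⊆ ℤ ∪ {-∞}`. -/
def laurentLambda (q : ℕ) (n : ℤ → WithBot ℤ) : Set (LaurentSeries K) :=
  {f | ∀ i, f.coeff i ∈ pB K q (n i)}

/-- `B = Σ_{i∈ℤ} 𝔭^{k_i} t^i ⊆ K((t))` for a sequence `(k_i) ⊆ ℤ ∪ {∞}`. -/
def laurentPT (q : ℕ) (k : ℤ → WithTop ℤ) : Set (LaurentSeries K) :=
  {f | ∀ i, f.coeff i ∈ pT K q (k i)}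

/-- `A = Σ_{i∈ℤ} 𝔭^{k_i} t^i ⊆ K((t))` for a sequence `(k_i) ⊆ ℤ ∪ {±∞}`. -/
def laurentPE (q : ℕ) (k : ℤ → WithBot (WithTop ℤ)) : Set (LaurentSeries K) :=
  {f | ∀ i, f.coeff i ∈ pE K q (k i)}

/-- The admissible seminorm `‖Σ x_i t^i‖ = max_i ‖x_i‖ q^{n_i}` on `K((t))`. -/
def laurentSeminorm (q : ℕ) (n : ℤ → WithBot ℤ) (f : LaurentSeries K) : ℝ :=
  sSup {r : ℝ | ∃ i : ℤ, r = ‖f.coeff i‖ * qpow q (n i)}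

/-- The ring of integers `K[[t]] ⊆ K((t))`. -/
def laurentIntegers : Set (LaurentSeries K) := {f | ∀ i, i < 0 → f.coeff i = 0}

/-- The rank-two ring of integers `𝒪 + tK[[t]] ⊆ K((t))`. -/
def laurentRankTwo : Set (LaurentSeries K) :=
  {f | (∀ i, i < 0 → f.coeff i = 0) ∧ ‖f.coeff 0‖ ≤ 1}

/-- The pairing `γ(x)(y) = π₀(xy) = Σ_i x_i y_{-i}` on `K((t))`. -/
def laurentPairing (x y : LaurentSeries K) : K := ∑' i : ℤ, x.coeff i * y.coeff (-i)

/-! ### The mixed characteristic field `K{{t}}` -/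

/-- The underlying `K`-vector space of `K{{t}}`: functions `x : ℤ → K` (coefficients of
`Σ x_i t^i`) with `inf_i v_K(x_i) > -∞` (i.e. bounded norms) and `x_i → 0` as `i → -∞`. -/
def mixedCarrier : Submodule K (ℤ → K) where
  carrier := {x | (∃ C : ℝ, ∀ i, ‖x i‖ ≤ C) ∧ Filter.Tendsto x Filter.atBot (nhds (0 : K))}
  zero_mem' := ⟨⟨0, fun i => by simp⟩, tendsto_const_nhds⟩
  add_mem' := by
    rintro x y ⟨⟨C, hC⟩, hx⟩ ⟨⟨D, hD⟩, hy⟩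
    refine ⟨⟨C + D, fun i => (norm_add_le _ _).trans (add_le_add (hC i) (hD i))⟩, ?_⟩
    have h := hx.add hy
    rw [add_zero] at h
    exact h
  smul_mem' := by
    rintro c x ⟨⟨C, hC⟩, hx⟩
    refine ⟨⟨‖c‖ * C, fun i => ?_⟩, ?_⟩
    · have h : ‖(c • x) i‖ = ‖c‖ * ‖x i‖ := by simp [norm_smul]
      rw [h]
      exact mul_le_mul_of_nonneg_left (hC i) (norm_nonneg c)
    · have h := hx.const_smul c
      rw [smul_zero] at h
      exact h

/-- The field `K{{t}}`, as a `K`-vector space. -/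
abbrev Mt := ↥(mixedCarrier K)

/-- Basic neighbourhoods of zero for the higher topology on `K{{t}}`:
`Σ V_i t^i` where each `V_i` is an open neighbourhood of `0` in `K`, some `𝔭^c` is
contained in every `V_i`, and for every `l` eventually `𝔭^l ⊆ V_i`. -/
def mixedBasic (q : ℕ) : Set (Set (Mt K)) :=
  {S | ∃ Vs : ℤ → Set K, (∀ i, IsOpen (Vs i) ∧ (0 : K) ∈ Vs i) ∧
    (∃ c : ℤ, ∀ i, {x : K | ‖x‖ ≤ (q : ℝ) ^ (-c)} ⊆ Vs i) ∧
    (∀ l : ℤ, ∃ i0 : ℤ, ∀ i, i0 ≤ i → {x : K | ‖x‖ ≤ (q : ℝ) ^ (-l)} ⊆ Vs i) ∧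
    S = {f : Mt K | ∀ i, f.1 i ∈ Vs i}}

/-- The higher topology on `K{{t}}`. -/
def mixedTop (q : ℕ) : TopologicalSpace (Mt K) := addTopologyOf (mixedBasic K q)

/-- `Λ = Σ_{i∈ℤ} 𝔭^{n_i} t^i ⊆ K{{t}}` for a sequence `(n_i) ⊆ ℤ ∪ {-∞}`. -/
def mixedLambda (q : ℕ) (n : ℤ → WithBot ℤ) : Set (Mt K) :=
  {f | ∀ i, f.1 i ∈ pB K q (n i)}

/-- `B = Σ_{i∈ℤ} 𝔭^{k_i} t^i ⊆ K{{t}}` for a sequence `(k_i) ⊆ ℤ ∪ {∞}`. -/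
def mixedPT (q : ℕ) (k : ℤ → WithTop ℤ) : Set (Mt K) :=
  {f | ∀ i, f.1 i ∈ pT K q (k i)}

/-- `A = Σ_{i∈ℤ} 𝔭^{k_i} t^i ⊆ K{{t}}` for a sequence `(k_i) ⊆ ℤ ∪ {±∞}`. -/
def mixedPE (q : ℕ) (k : ℤ → WithBot (WithTop ℤ)) : Set (Mt K) :=
  {f | ∀ i, f.1 i ∈ pE K q (k i)}

/-- The admissible seminorm `‖Σ x_i t^i‖ = sup_i ‖x_i‖ q^{n_i}` on `K{{t}}`. -/
def mixedSeminorm (q : ℕ) (n : ℤ → WithBot ℤ) (f : Mt K) : ℝ :=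
  sSup {r : ℝ | ∃ i : ℤ, r = ‖f.1 i‖ * qpow q (n i)}

/-- The ring of integers `𝒪{{t}} ⊆ K{{t}}`. -/
def mixedIntegers : Set (Mt K) := {f | ∀ i, ‖f.1 i‖ ≤ 1}

/-- The rank-two ring of integers `Σ_{i<0} 𝔭 t^i + Σ_{i≥0} 𝒪 t^i ⊆ K{{t}}`. -/
def mixedRankTwo (q : ℕ) : Set (Mt K) :=
  {f | (∀ i : ℤ, i < 0 → ‖f.1 i‖ ≤ ((q : ℝ))⁻¹) ∧ ∀ i : ℤ, 0 ≤ i → ‖f.1 i‖ ≤ 1}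

/-- The monomial `t^i ∈ K{{t}}`. -/
def mixedT (i : ℤ) : Mt K :=
  ⟨fun j => if j = i then 1 else 0,
    ⟨⟨1, fun j => by by_cases h : j = i <;> simp [h]⟩, by
      refine (tendsto_const_nhds : Filter.Tendsto (fun _ : ℤ => (0 : K))
        Filter.atBot (nhds 0)).congr' ?_
      filter_upwards [Filter.eventually_le_atBot (i - 1)] with j hj
      have h : j ≠ i := by omega
      simp [h]⟩⟩

/-- Coefficients of the product of two elements of `K{{t}}` (Cauchy product). -/
def mixedMulCoeff (x y : Mt K) : ℤ → K := fun k => ∑' i : ℤ, x.1 i * y.1 (k - i)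

/-- Multiplication on `K{{t}}`. -/
def mixedMul (x y : Mt K) : Mt K :=
  if h : mixedMulCoeff K x y ∈ mixedCarrier K then ⟨_, h⟩ else 0

/-- The pairing `γ(x)(y) = π₀(xy) = Σ_i x_i y_{-i}` on `K{{t}}`. -/
def mixedPairing (x y : Mt K) : K := ∑' i : ℤ, x.1 i * y.1 (-i)

/-!
A continuous linear form `w` maps some basic neighbourhood `Σ U_i t^i` of zero into the open
unit ball, and `c t^i` lies in that neighbourhood whenever `c ∈ U_i`. On `K((t))` we have
`U_i = K` for large `i`, so `|w(c t^i)| < 1` for every `c` forces `w(t^i) = 0`. On `K{{t}}`,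
`𝔭^l ⊆ U_i` gives `|w(t^i)| < |π^l|⁻¹ = q^l`; a uniform `c` bounds all `|w(t^i)|` by `q^c`,
and since every `l` works for large `i`, `w(t^i) → 0`.
-/

section HigherTopology

variable {K}

lemma exists_mem_subset_of_isOpen_addTopologyOf {W : Type} [AddCommGroup W] {B : Set (Set W)}
    (hB : DirectedOn (· ⊇ ·) B) (hne : B.Nonempty) {U : Set W}
    (hU : IsOpen[addTopologyOf B] U) (h0 : (0 : W) ∈ U) : ∃ S ∈ B, S ⊆ U := by
  have hU0 : U ∈ ⨅ S ∈ B, 𝓟 S := by simpa using hU 0 h0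
  refine (mem_biInf_of_directed (fun S₁ h₁ S₂ h₂ => ?_) hne).1 hU0
  obtain ⟨S₃, h₃, h₁₃, h₂₃⟩ := hB S₁ h₁ S₂ h₂
  exact ⟨S₃, h₃, principal_mono.2 h₁₃, principal_mono.2 h₂₃⟩

lemma exists_mem_forall_norm_lt_one_of_continuous {W : Type} [AddCommGroup W]
    {B : Set (Set W)} (hB : DirectedOn (· ⊇ ·) B) (hne : B.Nonempty) {w : W → K}
    (hw0 : w 0 = 0) (hw : @Continuous W K (addTopologyOf B) _ w) :
    ∃ S ∈ B, ∀ f ∈ S, ‖w f‖ < 1 := by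
  let := addTopologyOf B
  exact exists_mem_subset_of_isOpen_addTopologyOf (U := w ⁻¹' {x | ‖x‖ < 1}) hB hne
    (hw.isOpen_preimage {x : K | ‖x‖ < 1} (isOpen_lt continuous_norm continuous_const))
    (by simp [hw0])

lemma _root_.IsLinearMap.eq_zero_of_forall_norm_smul_lt_one {V : Type} [AddCommGroup V]
    [Module K V] {w : V → K} (hw : IsLinearMap K w) {x : V} (h : ∀ c : K, ‖w (c • x)‖ < 1) :
    w x = 0 := by
  by_contra hx
  obtain ⟨c, hc⟩ := NormedField.exists_lt_norm K ‖w x‖⁻¹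
  have hcx := h c
  rw [hw.map_smul, smul_eq_mul, norm_mul] at hcx
  have := (inv_lt_iff_one_lt_mul₀ (norm_pos_iff.2 hx)).1 hc
  linarith

lemma _root_.IsLinearMap.norm_lt_inv_norm_of_norm_smul_lt_one {V : Type} [AddCommGroup V]
    [Module K V] {w : V → K} (hw : IsLinearMap K w) {x : V} {a : K} (ha : a ≠ 0)
    (h : ‖w (a • x)‖ < 1) : ‖w x‖ < ‖a‖⁻¹ := by
  rw [hw.map_smul, smul_eq_mul, norm_mul] at h
  rwa [← mul_one ‖a‖⁻¹, lt_inv_mul_iff₀ (norm_pos_iff.2 ha)]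

end HigherTopology

section Laurent

variable {K}

lemma laurentBasic_directedOn : DirectedOn (· ⊇ ·) (laurentBasic K) := by
  rintro _ ⟨U₁, hU₁, ⟨N₁, hN₁⟩, rfl⟩ _ ⟨U₂, hU₂, ⟨N₂, hN₂⟩, rfl⟩
  refine ⟨_, ⟨fun i => U₁ i ∩ U₂ i, fun i => ⟨(hU₁ i).1.inter (hU₂ i).1, (hU₁ i).2, (hU₂ i).2⟩,
    ⟨max N₁ N₂, fun i hi => ?_⟩, rfl⟩, fun f hf i => (hf i).1, fun f hf i => (hf i).2⟩
  show U₁ i ∩ U₂ i = univ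
  rw [hN₁ i (le_of_max_le_left hi), hN₂ i (le_of_max_le_right hi), inter_self]

lemma laurentBasic_nonempty : (laurentBasic K).Nonempty :=
  ⟨_, fun _ => univ, fun _ => ⟨isOpen_univ, mem_univ 0⟩, ⟨0, fun _ _ => rfl⟩, rfl⟩

lemma smul_single_one_mem {U : ℤ → Set K} (hU : ∀ j, (0 : K) ∈ U j) {c : K} {i : ℤ}
    (hc : c ∈ U i) :
    c • HahnSeries.single i (1 : K) ∈ {f : LaurentSeries K | ∀ j, f.coeff j ∈ U j} := by
  intro j
  rw [HahnSeries.coeff_smul, HahnSeries.coeff_single]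
  split_ifs with hji
  · simpa [hji] using hc
  · simpa using hU j

theorem eventually_eq_zero_of_continuous_laurentTop {w : LaurentSeries K → K}
    (hw : IsLinearMap K w) (hcont : @Continuous _ K (laurentTop K) _ w) :
    ∃ N : ℤ, ∀ i, N ≤ i → w (HahnSeries.single i 1) = 0 := by
  obtain ⟨_, ⟨U, hU, ⟨N, hN⟩, rfl⟩, hS⟩ :=
    exists_mem_forall_norm_lt_one_of_continuous laurentBasic_directedOn laurentBasic_nonempty
      hw.map_zero hcont
  refine ⟨N, fun i hi => hw.eq_zero_of_forall_norm_smul_lt_one fun c => hS _ ?_⟩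
  exact smul_single_one_mem (fun j => (hU j).2) (by simp [hN i hi])

end Laurent

section Mixed

variable {K} {q : ℕ}

lemma mixedBasic_directedOn (hq : 1 ≤ (q : ℝ)) : DirectedOn (· ⊇ ·) (mixedBasic K q) := by
  rintro _ ⟨V₁, hV₁, ⟨c₁, hc₁⟩, hl₁, rfl⟩ _ ⟨V₂, hV₂, ⟨c₂, hc₂⟩, hl₂, rfl⟩
  refine ⟨_, ⟨fun i => V₁ i ∩ V₂ i, fun i => ⟨(hV₁ i).1.inter (hV₂ i).1, (hV₁ i).2, (hV₂ i).2⟩,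
    ⟨max c₁ c₂, fun i x hx => ⟨hc₁ i ?_, hc₂ i ?_⟩⟩, fun l => ?_, rfl⟩,
    fun f hf i => (hf i).1, fun f hf i => (hf i).2⟩
  · exact hx.trans (zpow_le_zpow_right₀ hq (by omega))
  · exact hx.trans (zpow_le_zpow_right₀ hq (by omega))
  · obtain ⟨i₁, hi₁⟩ := hl₁ l
    obtain ⟨i₂, hi₂⟩ := hl₂ l
    exact ⟨max i₁ i₂, fun i hi x hx =>
      ⟨hi₁ i (le_of_max_le_left hi) hx, hi₂ i (le_of_max_le_right hi) hx⟩⟩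

lemma mixedBasic_nonempty : (mixedBasic K q).Nonempty :=
  ⟨_, fun _ => univ, fun _ => ⟨isOpen_univ, mem_univ 0⟩, ⟨0, fun _ => subset_univ _⟩,
    fun _ => ⟨0, fun _ _ => subset_univ _⟩, rfl⟩

lemma smul_mixedT_mem {Vs : ℤ → Set K} (hVs : ∀ j, (0 : K) ∈ Vs j) {a : K} {i : ℤ}
    (ha : a ∈ Vs i) : a • mixedT K i ∈ {f : Mt K | ∀ j, f.1 j ∈ Vs j} := by
  intro j
  change a * (if j = i then 1 else 0) ∈ Vs j
  split_ifs with hji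
  · simpa [hji] using ha
  · simpa using hVs j

theorem bounded_and_tendsto_zero_of_continuous_mixedTop {π : K} (hπ : ‖π‖ = (q : ℝ)⁻¹)
    (hq : 1 < (q : ℝ)) {w : Mt K → K} (hw : IsLinearMap K w)
    (hcont : @Continuous _ K (mixedTop K q) _ w) :
    (∃ C : ℝ, ∀ i, ‖w (mixedT K i)‖ ≤ C) ∧ Tendsto (fun i => w (mixedT K i)) atTop (𝓝 0) := by
  obtain ⟨_, ⟨Vs, hVs, ⟨c, hc⟩, hl, rfl⟩, hS⟩ :=
    exists_mem_forall_norm_lt_one_of_continuous (mixedBasic_directedOn hq.le)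
      mixedBasic_nonempty hw.map_zero hcont
  have hπ_pow (l : ℤ) : ‖π ^ l‖ = (q : ℝ) ^ (-l) := by
    rw [norm_zpow, hπ, inv_zpow, zpow_neg]
  have norm_lt_zpow (l i : ℤ) (hli : {x : K | ‖x‖ ≤ (q : ℝ) ^ (-l)} ⊆ Vs i) :
      ‖w (mixedT K i)‖ < (q : ℝ) ^ l := by
    have hπ0 : π ^ l ≠ 0 := zpow_ne_zero _ (norm_pos_iff.1 (by rw [hπ]; positivity))
    have hlt := hw.norm_lt_inv_norm_of_norm_smul_lt_one hπ0
      (hS _ (smul_mixedT_mem (fun j => (hVs j).2) (hli (hπ_pow l).le)))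
    rwa [hπ_pow, zpow_neg, inv_inv] at hlt
  refine ⟨⟨_, fun i => (norm_lt_zpow c i (hc i)).le⟩, ?_⟩
  rw [NormedAddGroup.tendsto_nhds_zero]
  intro ε hε
  obtain ⟨n, hn⟩ := exists_pow_lt_of_lt_one hε (inv_lt_one_of_one_lt₀ hq)
  obtain ⟨i₀, hi₀⟩ := hl (-n)
  filter_upwards [eventually_ge_atTop i₀] with i hi
  refine (norm_lt_zpow (-n) i (by simpa using hi₀ i hi)).trans ?_
  rwa [zpow_neg, zpow_natCast, ← inv_pow]

end Mixed

/-- Let `F = K((t))` or `F = K{{t}}` with the higher topology, let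
`w : F → K` be a continuous `K`-linear form and set `a_i = w(t^{-i})`. Then `Σ a_i t^i`
defines an element of `F`: for `K((t))`, `a_i = 0` for all sufficiently small `i`; for
`K{{t}}`, the values `‖a_i‖` are bounded and `a_i → 0` as `i → -∞`. -/
theorem statement18 (q : ℕ) (hK : IsCharZeroLocalField K q) :
    (∀ w : LaurentSeries K → K, IsLinearMap K w → @Continuous _ _ (laurentTop K) _ w →
      ∃ i0 : ℤ, ∀ i : ℤ, i ≤ i0 → w (HahnSeries.single (-i) (1 : K)) = 0) ∧
    (∀ w : Mt K → K, IsLinearMap K w → @Continuous _ _ (mixedTop K q) _ w →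
      (∃ C : ℝ, ∀ i : ℤ, ‖w (mixedT K (-i))‖ ≤ C) ∧
      Filter.Tendsto (fun i : ℤ => w (mixedT K (-i))) Filter.atBot (nhds (0 : K))) := by
  obtain ⟨π, hπ⟩ := hK.exists_uniformizer
  have hq : 1 < (q : ℝ) := by exact_mod_cast hK.one_lt_q
  refine ⟨fun w hw hcont => ?_, fun w hw hcont => ?_⟩
  · obtain ⟨N, hN⟩ := eventually_eq_zero_of_continuous_laurentTop hw hcont
    exact ⟨-N, fun i hi => hN (-i) (by omega)⟩
  · obtain ⟨⟨C, hC⟩, hlim⟩ := bounded_and_tendsto_zero_of_continuous_mixedTop hπ hq hw hcont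
    exact ⟨⟨C, fun i => hC (-i)⟩, hlim.comp tendsto_neg_atBot_atTop⟩

end TwoDimLF
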